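/- In the s-rectangular setting, for every v ∈ ℝ^S, every state s ∈ S, and every policy π (π(·|s) ∈ Δ_A): min over all reward noises r_s : A → ℝ with ‖r_s‖_p ≤ α_s and all kernel noises u_s : S × A → ℝ with ‖u_s‖_p ≤ β_s (the ℓ_p norm over all pairs (s',a)) and ∑_{s'} u_s(s',a) = 0 for every a ∈ A, of ∑_{a} π(a|s)[R₀(s,a) + r_s(a) + γ ∑_{s'} (P₀(s'|s,a) + u_s(s',a)) v(s')], equals −(α_s + γ β_s κ_q(v))·‖π(·|s)‖_q + ∑_{a} π(a|s)[R₀(s,a) + γ ∑_{s'} P₀(s'|s,a) v(s')], where ‖π(·|s)‖_q is the ℓ_q norm of the vector π(·|s) ∈ Δ_A. -/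

import Mathlib

/-!
Write the objective as the nominal Bellman value plus `⟨π, r⟩ + γ ∑ₐ π(a) ⟨u(a, ·), v⟩`.
Hölder gives `⟨π, r⟩ ≥ -α ‖π‖_q`. Since every row of `u` sums to zero,
`⟨u(a, ·), v⟩ = ⟨u(a, ·), v - ω⟩` for every `ω`, and Hölder on `A × S` against the tensor
`π ⊗ (v - ω)` gives `∑ₐ π(a) ⟨u(a, ·), v⟩ ≥ -β ‖π‖_q ‖v - ω‖_q`.
Both bounds are attained by Hölder-dual vectors: `r = -α π*` and `u = -β π* ⊗ (v - ω₀)*`,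
where `ω₀` minimises `‖v - ω‖_q`. The first-order condition at `ω₀` says exactly that
`(v - ω₀)*` sums to zero, so this `u` is an admissible kernel noise.
-/

open Finset Real

noncomputable def pNorm {ι : Type*} [Fintype ι] (p : ℝ) (f : ι → ℝ) : ℝ :=
  (∑ i, |f i| ^ p) ^ (1 / p)

namespace pNorm

variable {ι κ : Type*} [Fintype ι] [Fintype κ] {p q : ℝ}

lemma nonneg (p : ℝ) (f : ι → ℝ) : 0 ≤ pNorm p f :=
  rpow_nonneg (sum_nonneg fun _ _ => rpow_nonneg (abs_nonneg _) _) _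

lemma rpow_eq_sum (hp : p ≠ 0) (f : ι → ℝ) : pNorm p f ^ p = ∑ i, |f i| ^ p := by
  rw [pNorm, one_div, rpow_inv_rpow (sum_nonneg fun _ _ => rpow_nonneg (abs_nonneg _) _) hp]

@[simp] lemma zero (hp : p ≠ 0) : pNorm p (0 : ι → ℝ) = 0 := by
  simp [pNorm, zero_rpow hp, hp]

lemma const_mul (hp : p ≠ 0) (c : ℝ) (f : ι → ℝ) :
    pNorm p (fun i => c * f i) = |c| * pNorm p f := by
  simp only [pNorm, abs_mul, mul_rpow (abs_nonneg _) (abs_nonneg _), ← mul_sum]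
  rw [mul_rpow (rpow_nonneg (abs_nonneg _) _)
    (sum_nonneg fun _ _ => rpow_nonneg (abs_nonneg _) _), one_div, rpow_rpow_inv (abs_nonneg _) hp]

lemma mul_prod (f : ι → ℝ) (g : κ → ℝ) :
    pNorm p (fun x : ι × κ => f x.1 * g x.2) = pNorm p f * pNorm p g := by
  simp only [pNorm, abs_mul, mul_rpow (abs_nonneg _) (abs_nonneg _), Fintype.sum_prod_type,
    ← Fintype.sum_mul_sum]
  exact mul_rpow (sum_nonneg fun _ _ => rpow_nonneg (abs_nonneg _) _)
    (sum_nonneg fun _ _ => rpow_nonneg (abs_nonneg _) _)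

lemma uncurry (f : ι → κ → ℝ) :
    pNorm p (Function.uncurry f) = (∑ i, ∑ j, |f i j| ^ p) ^ (1 / p) := by
  simp only [pNorm, Fintype.sum_prod_type, Function.uncurry_apply_pair]

lemma neg_mul_le_sum_mul (hpq : p.HolderConjugate q) (f g : ι → ℝ) :
    -(pNorm p f * pNorm q g) ≤ ∑ i, f i * g i := by
  have := inner_le_Lp_mul_Lq univ (fun i => -f i) g hpq
  simp only [abs_neg, neg_mul, sum_neg_distrib] at this
  rw [pNorm, pNorm]
  linarith

end pNorm

section HolderDual

variable {ι : Type*} [Fintype ι] {p q : ℝ}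

lemma abs_abs_rpow_sub_two_mul (hq : q ≠ 1) (x : ℝ) :
    |(|x| ^ (q - 2) * x)| = |x| ^ (q - 1) := by
  rw [abs_mul, abs_of_nonneg (rpow_nonneg (abs_nonneg x) _), show q - 1 = q - 2 + 1 by ring,
    rpow_add' (abs_nonneg x) (by contrapose! hq; linarith), rpow_one]

lemma abs_rpow_sub_two_mul_mul_self (hq : q ≠ 0) (x : ℝ) : |x| ^ (q - 2) * x * x = |x| ^ q := by
  rw [mul_assoc, ← abs_mul_abs_self, ← pow_two, ← rpow_natCast, ← rpow_add' (abs_nonneg x)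
    (by simpa using hq)]
  norm_num

/-- `|f i| ^ (q - 2) * f i` is the gradient of `∑ i, |f i| ^ q / q`; scaling it by
`‖f‖_q ^ (1 - q)` gives the vector attaining equality in Hölder's inequality (and `0` for `f = 0`,
as `0 ^ (1 - q) = 0`). -/
noncomputable def holderDual (q : ℝ) (f : ι → ℝ) : ι → ℝ :=
  fun i => pNorm q f ^ (1 - q) * (|f i| ^ (q - 2) * f i)

lemma sum_holderDual_mul (hq : 1 < q) (f : ι → ℝ) :
    ∑ i, holderDual q f i * f i = pNorm q f := by
  simp only [holderDual, mul_assoc, ← mul_sum,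
    abs_rpow_sub_two_mul_mul_self (by linarith : q ≠ 0)]
  rw [← pNorm.rpow_eq_sum (by linarith), ← rpow_add' (pNorm.nonneg q f) (by simp),
    sub_add_cancel, rpow_one]

lemma pNorm_holderDual_le_one (hpq : p.HolderConjugate q) (f : ι → ℝ) :
    pNorm p (holderDual q f) ≤ 1 := by
  have hqp : (q - 1) * p = q := hpq.symm.sub_one_mul_conj
  have key : ∑ i, |holderDual q f i| ^ p = pNorm q f ^ (-q) * pNorm q f ^ q := by
    simp only [holderDual, abs_mul, abs_abs_rpow_sub_two_mul hpq.symm.lt.ne',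
      abs_of_nonneg (rpow_nonneg (pNorm.nonneg q f) _), mul_rpow (rpow_nonneg (pNorm.nonneg q f) _)
        (rpow_nonneg (abs_nonneg _) _), ← rpow_mul (pNorm.nonneg q f), ← rpow_mul (abs_nonneg _),
      hqp, ← mul_sum, pNorm.rpow_eq_sum hpq.symm.ne_zero]
    congr 2
    linear_combination -hqp
  refine rpow_le_one (sum_nonneg fun _ _ => rpow_nonneg (abs_nonneg _) _) ?_ hpq.one_div_nonneg
  rw [key]
  rcases (pNorm.nonneg q f).eq_or_lt with h | h
  · rw [← h, zero_rpow (neg_ne_zero.2 hpq.symm.ne_zero), zero_mul]; exact zero_le_one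
  · rw [← rpow_add h, neg_add_cancel, rpow_zero]

lemma sum_holderDual_eq_zero {f : ι → ℝ} (hf : ∑ i, |f i| ^ (q - 2) * f i = 0) :
    ∑ i, holderDual q f i = 0 := by
  simp only [holderDual, ← mul_sum, hf, mul_zero]

end HolderDual

section CentralMoment

variable {ι : Type*} [Fintype ι] {q : ℝ}

lemma exists_forall_sum_abs_sub_rpow_le (hq : 0 ≤ q) (v : ι → ℝ) :
    ∃ ω₀, ∀ ω, ∑ i, |v i - ω₀| ^ q ≤ ∑ i, |v i - ω| ^ q := by
  set M := ∑ i, |v i|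
  have hv : ∀ i, v i ∈ Set.Icc (-M) M := fun i =>
    abs_le.1 (single_le_sum (f := fun i => |v i|) (fun _ _ => abs_nonneg _) (mem_univ i))
  have hM : -M ≤ M := by linarith [sum_nonneg fun i (_ : i ∈ univ) => abs_nonneg (v i)]
  have hcont : Continuous fun ω => ∑ i, |v i - ω| ^ q := by
    fun_prop (disch := exact fun _ => Or.inr hq)
  obtain ⟨ω₀, -, hω₀⟩ :=
    isCompact_Icc.exists_isMinOn (Set.nonempty_Icc.2 hM) hcont.continuousOn
  refine ⟨ω₀, fun ω => (hω₀ (Set.projIcc (-M) M hM ω).2).trans ?_⟩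
  -- projecting `ω` onto an interval containing every `v i` moves it closer to each of them
  refine sum_le_sum fun i _ => rpow_le_rpow (abs_nonneg _) ?_ hq
  simpa [Set.projIcc_of_mem hM (hv i)] using Set.abs_projIcc_sub_projIcc hM (c := v i) (d := ω)

lemma sum_abs_rpow_sub_two_mul_eq_zero (hq : 1 < q) {v : ι → ℝ} {ω₀ : ℝ}
    (hω₀ : ∀ ω, ∑ i, |v i - ω₀| ^ q ≤ ∑ i, |v i - ω| ^ q) :
    ∑ i, |v i - ω₀| ^ (q - 2) * (v i - ω₀) = 0 := by
  have hderiv : HasDerivAt (fun ω => ∑ i, |v i - ω| ^ q)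
      (∑ i, q * |v i - ω₀| ^ (q - 2) * (v i - ω₀) * -1) ω₀ :=
    HasDerivAt.fun_sum fun i _ =>
      (hasDerivAt_abs_rpow (v i - ω₀) hq).comp ω₀ ((hasDerivAt_id ω₀).const_sub (v i))
  have hmin : IsLocalMin (fun ω => ∑ i, |v i - ω| ^ q) ω₀ := Filter.Eventually.of_forall hω₀
  have := hmin.hasDerivAt_eq_zero hderiv
  simp only [mul_neg_one, sum_neg_distrib, neg_eq_zero, mul_assoc, ← mul_sum] at this
  exact (mul_eq_zero.1 this).resolve_left (by linarith)

lemma iInf_pNorm_sub_const_eq (hq : 0 < q) {v : ι → ℝ} {ω₀ : ℝ}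
    (hω₀ : ∀ ω, ∑ i, |v i - ω₀| ^ q ≤ ∑ i, |v i - ω| ^ q) :
    ⨅ ω, pNorm q (fun i => v i - ω) = pNorm q (fun i => v i - ω₀) :=
  le_antisymm (ciInf_le ⟨0, Set.forall_mem_range.2 fun _ => pNorm.nonneg _ _⟩ ω₀)
    (le_ciInf fun ω => rpow_le_rpow (sum_nonneg fun _ _ => rpow_nonneg (abs_nonneg _) _) (hω₀ ω)
      (by positivity))

end CentralMoment

lemma sum_mul_sub_const_eq {ι : Type*} [Fintype ι] {w : ι → ℝ} (hw : ∑ i, w i = 0) (v : ι → ℝ)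
    (ω : ℝ) : ∑ i, w i * (v i - ω) = ∑ i, w i * v i := by
  simp only [mul_sub, sum_sub_distrib, ← sum_mul, hw, zero_mul, sub_zero]

section RobustBellman

variable {S A : Type*} [Fintype S] [Fintype A] {p q : ℝ}

lemma sum_mul_perturbed_eq (pol R r : A → ℝ) (P u : A → S → ℝ) (v : S → ℝ) (γ : ℝ) :
    ∑ a, pol a * (R a + r a + γ * ∑ s', (P a s' + u a s') * v s')
      = ∑ a, pol a * (R a + γ * ∑ s', P a s' * v s') + ∑ a, pol a * r a
        + γ * ∑ a, pol a * ∑ s', u a s' * v s' := by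
  simp only [add_mul, sum_add_distrib, mul_add, mul_sum, mul_left_comm (pol _) γ]
  ring

lemma neg_mul_pNorm_le_sum_mul (hpq : p.HolderConjugate q) {α : ℝ} {r : A → ℝ}
    (hr : pNorm p r ≤ α) (pol : A → ℝ) : -(α * pNorm q pol) ≤ ∑ a, pol a * r a := by
  have := pNorm.neg_mul_le_sum_mul hpq r pol
  simp only [mul_comm (r _)] at this
  linarith [mul_le_mul_of_nonneg_right hr (pNorm.nonneg q pol)]

lemma neg_mul_pNorm_le_sum_mul_sum_mul (hpq : p.HolderConjugate q) {β : ℝ} {u : A → S → ℝ}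
    (hu : ∀ a, ∑ s', u a s' = 0) (huβ : pNorm p (Function.uncurry u) ≤ β) (pol : A → ℝ)
    (v : S → ℝ) (ω : ℝ) :
    -(β * pNorm q (fun s' => v s' - ω) * pNorm q pol) ≤ ∑ a, pol a * ∑ s', u a s' * v s' := by
  have hsum : ∑ a, pol a * ∑ s', u a s' * v s'
      = ∑ x : A × S, Function.uncurry u x * (pol x.1 * (v x.2 - ω)) := by
    simp only [Fintype.sum_prod_type, Function.uncurry_apply_pair,
      ← sum_mul_sub_const_eq (hu _) v ω, mul_sum]
    exact sum_congr rfl fun a _ => sum_congr rfl fun s' _ => by ring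
  have := pNorm.neg_mul_le_sum_mul hpq (Function.uncurry u)
    fun x : A × S => pol x.1 * (v x.2 - ω)
  rw [pNorm.mul_prod pol fun s' => v s' - ω, ← hsum] at this
  linarith [mul_le_mul_of_nonneg_right huβ
    (mul_nonneg (pNorm.nonneg q pol) (pNorm.nonneg q fun s' => v s' - ω))]

lemma exists_pNorm_le_sum_mul_eq (hpq : p.HolderConjugate q) {α : ℝ} (hα : 0 ≤ α)
    (pol : A → ℝ) :
    ∃ r : A → ℝ, pNorm p r ≤ α ∧ ∑ a, pol a * r a = -(α * pNorm q pol) := by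
  refine ⟨fun a => -α * holderDual q pol a, ?_, ?_⟩
  · rw [pNorm.const_mul hpq.ne_zero, abs_neg, abs_of_nonneg hα]
    exact mul_le_of_le_one_right hα (pNorm_holderDual_le_one hpq pol)
  · simp only [mul_left_comm (pol _), ← mul_sum, mul_comm (pol _),
      sum_holderDual_mul hpq.symm.lt]
    ring

lemma exists_sum_eq_zero_pNorm_le_sum_mul_sum_mul_eq (hpq : p.HolderConjugate q) {β : ℝ}
    (hβ : 0 ≤ β) (pol : A → ℝ) {v : S → ℝ} {ω₀ : ℝ}
    (hω₀ : ∀ ω, ∑ s', |v s' - ω₀| ^ q ≤ ∑ s', |v s' - ω| ^ q) :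
    ∃ u : A → S → ℝ, (∀ a, ∑ s', u a s' = 0) ∧ pNorm p (Function.uncurry u) ≤ β ∧
      ∑ a, pol a * ∑ s', u a s' * v s'
        = -(β * pNorm q (fun s' => v s' - ω₀) * pNorm q pol) := by
  set c := holderDual q pol
  set w := holderDual q fun s' => v s' - ω₀
  have hw : ∑ s', w s' = 0 :=
    sum_holderDual_eq_zero (sum_abs_rpow_sub_two_mul_eq_zero hpq.symm.lt hω₀)
  have hwv : ∑ s', w s' * v s' = pNorm q fun s' => v s' - ω₀ := by
    rw [← sum_mul_sub_const_eq hw v ω₀]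
    exact sum_holderDual_mul hpq.symm.lt _
  refine ⟨fun a s' => -β * c a * w s', fun a => by rw [← mul_sum, hw, mul_zero], ?_, ?_⟩
  · change pNorm p (fun x : A × S => -β * c x.1 * w x.2) ≤ β
    rw [pNorm.mul_prod (fun a => -β * c a) w, pNorm.const_mul hpq.ne_zero, abs_neg,
      abs_of_nonneg hβ, mul_assoc]
    exact mul_le_of_le_one_right hβ (mul_le_one₀ (pNorm_holderDual_le_one hpq pol)
      (pNorm.nonneg _ _) (pNorm_holderDual_le_one hpq _))
  · simp only [mul_assoc, ← mul_sum, hwv]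
    rw [← sum_holderDual_mul hpq.symm.lt pol, mul_sum, mul_sum, ← sum_neg_distrib]
    exact sum_congr rfl fun a _ => by ring

end RobustBellman

theorem stmt5_general (S A : Type*) [Fintype S] [Fintype A]
    (P₀ : S → A → S → ℝ)
    (R₀ : S → A → ℝ) (γ : ℝ) (hγ0 : 0 ≤ γ)
    (p q : ℝ) (hp : 1 < p) (hq : q = p / (p - 1))
    (α β : S → ℝ) (hα : ∀ s, 0 ≤ α s) (hβ : ∀ s, 0 ≤ β s)
    (v : S → ℝ) (s : S)
    (pol : S → A → ℝ) :
    IsLeast {x : ℝ | ∃ (r : S → A → ℝ) (u : S → A → S → ℝ),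
        (∀ s, (∑ a, |r s a| ^ p) ^ (1 / p) ≤ α s) ∧
        (∀ s a, ∑ s', u s a s' = 0) ∧
        (∀ s, (∑ a, ∑ s', |u s a s'| ^ p) ^ (1 / p) ≤ β s) ∧
        x = ∑ a, pol s a * (R₀ s a + r s a +
              γ * ∑ s', (P₀ s a s' + u s a s') * v s')}
      (-(α s + γ * β s * (⨅ ω : ℝ, (∑ s', |v s' - ω| ^ q) ^ (1 / q)))
          * (∑ a, |pol s a| ^ q) ^ (1 / q)
        + ∑ a, pol s a * (R₀ s a + γ * ∑ s', P₀ s a s' * v s')) := by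
  classical
  have hpq : p.HolderConjugate q := (holderConjugate_iff_eq_conjExponent hp).2 hq
  obtain ⟨ω₀, hω₀⟩ := exists_forall_sum_abs_sub_rpow_le hpq.symm.nonneg v
  have hκ : ⨅ ω : ℝ, (∑ s', |v s' - ω| ^ q) ^ (1 / q) = pNorm q fun s' => v s' - ω₀ :=
    iInf_pNorm_sub_const_eq hpq.symm.pos hω₀
  have hnorm (u : A → S → ℝ) :
      (∑ a, ∑ s', |u a s'| ^ p) ^ (1 / p) = pNorm p (Function.uncurry u) :=
    (pNorm.uncurry u).symm
  have hN : (∑ a, |pol s a| ^ q) ^ (1 / q) = pNorm q (pol s) := rfl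
  simp only [hκ, hN, hnorm]
  obtain ⟨r₀, hr₀, hr₀pol⟩ := exists_pNorm_le_sum_mul_eq hpq (hα s) (pol s)
  obtain ⟨u₀, hu₀, hu₀β, hu₀pol⟩ :=
    exists_sum_eq_zero_pNorm_le_sum_mul_sum_mul_eq hpq (hβ s) (pol s) hω₀
  refine ⟨⟨Function.update 0 s r₀, Function.update 0 s u₀, ?_, ?_, ?_, ?_⟩, ?_⟩
  · exact (Function.forall_update_iff (0 : S → A → ℝ) fun t r => pNorm p r ≤ α t).2
      ⟨hr₀, fun t _ => (pNorm.zero hpq.ne_zero).trans_le (hα t)⟩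
  · exact (Function.forall_update_iff (0 : S → A → S → ℝ) fun _ u => ∀ a, ∑ s', u a s' = 0).2
      ⟨hu₀, fun t _ => by simp⟩
  · exact (Function.forall_update_iff (0 : S → A → S → ℝ)
      fun t u => pNorm p (Function.uncurry u) ≤ β t).2
      ⟨hu₀β, fun t _ => (pNorm.zero hpq.ne_zero).trans_le (hβ t)⟩
  · simp only [Function.update_self, sum_mul_perturbed_eq, hr₀pol, hu₀pol]
    ring
  · rintro x ⟨r, u, hr, hu, huβ, rfl⟩
    have hreward := neg_mul_pNorm_le_sum_mul hpq (hr s) (pol s)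
    have hkernel := neg_mul_pNorm_le_sum_mul_sum_mul hpq (hu s) (huβ s) (pol s) v ω₀
    rw [sum_mul_perturbed_eq]
    linarith [mul_le_mul_of_nonneg_left hkernel hγ0]

/-- s-rectangular `L_p` robust Bellman operator equals the
reward-value-policy regularized non-robust Bellman operator, with policy
penalty `(α_s + γ β_s κ_q(v)) ‖π(·|s)‖_q`.  `κ_q(v) = ⨅ ω, ‖v - ω·𝟙‖_q`. -/
theorem stmt5 (S A : Type*) [Fintype S] [Fintype A] [Nonempty S] [Nonempty A]
    (P₀ : S → A → S → ℝ) (hP₀pos : ∀ s a s', 0 ≤ P₀ s a s')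
    (hP₀sum : ∀ s a, ∑ s', P₀ s a s' = 1)
    (R₀ : S → A → ℝ) (γ : ℝ) (hγ0 : 0 ≤ γ) (hγ1 : γ < 1)
    (p q : ℝ) (hp : 1 < p) (hq : q = p / (p - 1))
    (α β : S → ℝ) (hα : ∀ s, 0 ≤ α s) (hβ : ∀ s, 0 ≤ β s)
    (v : S → ℝ) (s : S)
    (pol : S → A → ℝ) (hpolpos : ∀ s a, 0 ≤ pol s a)
    (hpolsum : ∀ s, ∑ a, pol s a = 1) :
    IsLeast {x : ℝ | ∃ (r : S → A → ℝ) (u : S → A → S → ℝ),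
        (∀ s, (∑ a, |r s a| ^ p) ^ (1 / p) ≤ α s) ∧
        (∀ s a, ∑ s', u s a s' = 0) ∧
        (∀ s, (∑ a, ∑ s', |u s a s'| ^ p) ^ (1 / p) ≤ β s) ∧
        x = ∑ a, pol s a * (R₀ s a + r s a +
              γ * ∑ s', (P₀ s a s' + u s a s') * v s')}
      (-(α s + γ * β s * (⨅ ω : ℝ, (∑ s', |v s' - ω| ^ q) ^ (1 / q)))
          * (∑ a, |pol s a| ^ q) ^ (1 / q)
        + ∑ a, pol s a * (R₀ s a + γ * ∑ s', P₀ s a s' * v s')) :=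
  stmt5_general S A P₀ R₀ γ hγ0 p q hp hq α β hα hβ v s pol
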